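/- Let c ∈ ℝ, let f₁, f₂ : [0,1] → [0,1] be Lebesgue measurable functions such that the preimage under each f_n of every Lebesgue-null set is Lebesgue null, and define P by Ph = −(1/2)(h∘f₁) − (1/2)(h∘f₂). Then, with g the constant function c: (i) the constant function c/2 belongs to L¹([0,1]) and satisfies φ = Pφ + g; (ii) P^k g equals the constant function (−1)^k c for every k ∈ ℕ, so that Σ_{k=0}^m P^k g = (1/2)(1+(−1)^m) c for every m ∈ ℕ; (iii) the series Σ_{k=0}^∞ P^k g converges in L¹([0,1]) if and only if c = 0. -/

import Mathlib

open MeasureTheory Filter Set Topology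

noncomputable abbrev μ01 : MeasureTheory.Measure ℝ := MeasureTheory.volume.restrict (Set.Icc 0 1)

/-- The constant function with value `c`, as an element of `L¹([0,1])`. -/
noncomputable def constL1 (c : ℝ) : Lp ℝ 1 μ01 :=
  (MeasureTheory.memLp_const c).toLp fun _ : ℝ => c

/-- The operator `Ph = -(1/2)(h ∘ f₁) - (1/2)(h ∘ f₂)`, acting on functions. -/
noncomputable def Pfun2 (f₁ f₂ : ℝ → ℝ) (h : ℝ → ℝ) : ℝ → ℝ :=
  fun x => -(1 / 2) * h (f₁ x) - (1 / 2) * h (f₂ x)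

/-!
`P` sends the constant `a` to the constant `-a`, so `Pᵏ g ≡ (-1)ᵏ c`.
The terms of the series then all have `L¹` norm `|c|`, so they tend to zero, as the terms of a
convergent series must, only when `c = 0`.
-/

theorem tendsto_zero_of_tendsto_sum_range_succ {G : Type*} [AddCommGroup G] [TopologicalSpace G]
    [IsTopologicalAddGroup G] {a : ℕ → G} {s : G}
    (h : Tendsto (fun m => ∑ k ∈ Finset.range (m + 1), a k) atTop (𝓝 s)) :
    Tendsto a atTop (𝓝 0) := by
  rw [← tendsto_add_atTop_iff_nat 1, ← sub_self s]
  refine ((h.comp (tendsto_add_atTop_nat 1)).sub h).congr fun m => ?_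
  simp only [Function.comp_apply, Finset.sum_range_succ _ (m + 1), add_sub_cancel_left]

theorem Pfun2_const (f₁ f₂ : ℝ → ℝ) (a : ℝ) : Pfun2 f₁ f₂ (fun _ => a) = fun _ => -a := by
  funext x
  simp only [Pfun2]
  ring

theorem iterate_Pfun2_const (f₁ f₂ : ℝ → ℝ) (a : ℝ) (k : ℕ) :
    (Pfun2 f₁ f₂)^[k] (fun _ => a) = fun _ => (-1 : ℝ) ^ k * a := by
  induction k with
  | zero => simp
  | succ k ih =>
    rw [Function.iterate_succ_apply', ih, Pfun2_const, pow_succ]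
    ring_nf

theorem sum_range_succ_neg_one_pow_mul (c : ℝ) (m : ℕ) :
    ∑ k ∈ Finset.range (m + 1), (-1 : ℝ) ^ k * c = 1 / 2 * (1 + (-1 : ℝ) ^ m) * c := by
  rw [← Finset.sum_mul, geom_sum_eq (by norm_num), pow_succ]
  ring

theorem constL1_zero : constL1 0 = 0 :=
  map_zero (Lp.const 1 μ01)

theorem norm_constL1 (c : ℝ) : ‖constL1 c‖ = |c| := by
  rw [constL1, MemLp.toLp_const, Lp.norm_const' _ _ _ one_ne_zero ENNReal.one_ne_top]
  simp [measureReal_def, Real.volume_Icc]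

theorem stmt3_general (c : ℝ) (f₁ f₂ : ℝ → ℝ) :
    -- (i) the constant function c/2 belongs to L¹([0,1]) and satisfies φ = Pφ + g with g ≡ c
    (MemLp (fun _ : ℝ => c / 2) 1 μ01 ∧
      (fun _ : ℝ => c / 2) = fun x => Pfun2 f₁ f₂ (fun _ => c / 2) x + c) ∧
    -- (ii) P^k g is the constant function (-1)^k c, and the partial sums are as stated
    (∀ k : ℕ, (Pfun2 f₁ f₂)^[k] (fun _ => c) = fun _ : ℝ => (-1 : ℝ) ^ k * c) ∧
    (∀ m : ℕ, (∑ k ∈ Finset.range (m + 1), (Pfun2 f₁ f₂)^[k] (fun _ => c)) =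
      fun _ : ℝ => (1 / 2) * (1 + (-1 : ℝ) ^ m) * c) ∧
    -- (iii) the series Σ P^k g converges in L¹([0,1]) iff c = 0
    ((∃ s : Lp ℝ 1 μ01,
        Tendsto (fun m => ∑ k ∈ Finset.range (m + 1), constL1 ((-1 : ℝ) ^ k * c)) atTop (𝓝 s)) ↔
      c = 0) := by
  refine ⟨⟨memLp_const _, ?_⟩, iterate_Pfun2_const f₁ f₂ c, fun m => ?_, ⟨?_, ?_⟩⟩
  · funext x
    rw [Pfun2_const]
    ring
  · funext x
    simp only [Finset.sum_apply, iterate_Pfun2_const, sum_range_succ_neg_one_pow_mul]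
  · rintro ⟨s, hs⟩
    have hnorm := (tendsto_zero_of_tendsto_sum_range_succ hs).norm
    simp only [norm_constL1, abs_mul, abs_pow, abs_neg, abs_one, one_pow, one_mul,
      norm_zero] at hnorm
    exact abs_eq_zero.mp (tendsto_nhds_unique tendsto_const_nhds hnorm)
  · rintro rfl
    exact ⟨0, by simp only [mul_zero, constL1_zero, Finset.sum_const_zero, tendsto_const_nhds]⟩

theorem stmt3 (c : ℝ) (f₁ f₂ : ℝ → ℝ)
    (hmaps₁ : MapsTo f₁ (Icc 0 1) (Icc 0 1)) (hmaps₂ : MapsTo f₂ (Icc 0 1) (Icc 0 1))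
    (hmeas₁ : Measurable f₁) (hmeas₂ : Measurable f₂)
    (hnull₁ : ∀ A : Set ℝ, volume A = 0 → μ01 (f₁ ⁻¹' A) = 0)
    (hnull₂ : ∀ A : Set ℝ, volume A = 0 → μ01 (f₂ ⁻¹' A) = 0) :
    -- (i) the constant function c/2 belongs to L¹([0,1]) and satisfies φ = Pφ + g with g ≡ c
    (MemLp (fun _ : ℝ => c / 2) 1 μ01 ∧
      (fun _ : ℝ => c / 2) = fun x => Pfun2 f₁ f₂ (fun _ => c / 2) x + c) ∧
    -- (ii) P^k g is the constant function (-1)^k c, and the partial sums are as stated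
    (∀ k : ℕ, (Pfun2 f₁ f₂)^[k] (fun _ => c) = fun _ : ℝ => (-1 : ℝ) ^ k * c) ∧
    (∀ m : ℕ, (∑ k ∈ Finset.range (m + 1), (Pfun2 f₁ f₂)^[k] (fun _ => c)) =
      fun _ : ℝ => (1 / 2) * (1 + (-1 : ℝ) ^ m) * c) ∧
    -- (iii) the series Σ P^k g converges in L¹([0,1]) iff c = 0
    ((∃ s : Lp ℝ 1 μ01,
        Tendsto (fun m => ∑ k ∈ Finset.range (m + 1), constL1 ((-1 : ℝ) ^ k * c)) atTop (𝓝 s)) ↔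
      c = 0) :=
  stmt3_general c f₁ f₂
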